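/- (Lemma 3 of the paper.) Fix a target error probability ε̄ ∈ (0, 1/2] and let q = Q⁻¹(ε̄). The function (m,γ) ↦ −r(m,γ) = −C(γ) + √(V(γ)/m)·q is jointly convex on the convex set { (m,γ) : γ ≥ 1, m ≥ q² }. -/

import Mathlib

open Real MeasureTheory

/-- The Gaussian Q-function `Q(x) = ∫ₓ^∞ (1/√(2π)) e^{−t²/2} dt`. -/
noncomputable def Qfun (x : ℝ) : ℝ :=
  ∫ t in Set.Ioi x, Real.exp (-t ^ 2 / 2) / Real.sqrt (2 * Real.pi)

/-- Shannon capacity `C(γ) = log₂(1+γ)`. -/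
noncomputable def Cap (γ : ℝ) : ℝ := Real.logb 2 (1 + γ)

/-- Channel dispersion `V(γ) = 1 − (1+γ)⁻²`. -/
noncomputable def Vdisp (γ : ℝ) : ℝ := 1 - ((1 + γ) ^ 2)⁻¹

/-- Finite-blocklength coding rate `r(m,γ) = C(γ) − √(V(γ)/m)·q`, where
`q = Q⁻¹(ε̄)` is the inverse Q-function of the target error probability. -/
noncomputable def rate (q m γ : ℝ) : ℝ := Cap γ - Real.sqrt (Vdisp γ / m) * q


lemma quad_nonneg (A B C x y : ℝ) (hA : 0 < A) (hdisc : 0 ≤ 4*A*C - B^2) :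
    0 ≤ A*x^2 - B*(x*y) + C*y^2 := by
  nlinarith [sq_nonneg (2*A*x - B*y), mul_nonneg hdisc (sq_nonneg y), hA]

set_option maxHeartbeats 1000000 in
lemma Epoly (t u s q dg dm L : ℝ) (ht : 2 ≤ t) (hu : 0.86 ≤ u) (hsq : q ≤ s) (hq : 0 < q)
    (hL1 : 0.69 ≤ L) (hL2 : L ≤ 0.6932) :
    0 ≤ 4*dg^2*t^4*u^3*s^5 + 3*q*L*dm^2*t^6*u^4 - 4*q*L*dg^2*(3*t^2*u^2+1)*s^4
      - 4*q*L*dg*dm*t^3*u^2*s^2 := by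
  have hs : 0 < s := lt_of_lt_of_le hq hsq
  have ht2 : (4:ℝ) ≤ t^2 := by nlinarith
  have hu0 : (0:ℝ) ≤ u := by linarith
  have hx : (2.9584:ℝ) ≤ t^2*u^2 := by nlinarith
  have h2 : (3.44:ℝ) ≤ t^2*u := by nlinarith
  have h1 : (3.44:ℝ)*(t^2*u^2) ≤ t^4*u^3 := by
    nlinarith [mul_nonneg (mul_nonneg (sq_nonneg t) (sq_nonneg u))
      (by linarith : (0:ℝ) ≤ t^2*u - 3.44)]
  have hcore1 : L*(3*t^2*u^2+1) + 0.1 ≤ t^4*u^3 := by nlinarith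
  have hcore2 : L*(9*t^2*u^2+4) + 1 ≤ 3*t^4*u^3 := by nlinarith
  have hL0 : (0:ℝ) < L := by linarith
  have k1 : q*L*(3*t^2*u^2+1) < q*(t^4*u^3) := by
    rw [mul_assoc]; exact mul_lt_mul_of_pos_left (by linarith) hq
  have k2 : q*(t^4*u^3) ≤ s*(t^4*u^3) := mul_le_mul_of_nonneg_right hsq (by positivity)
  have hA : 0 < t^4*u^3*s^5 - q*L*(3*t^2*u^2+1)*s^4 := by
    have hfac : t^4*u^3*s^5 - q*L*(3*t^2*u^2+1)*s^4
        = s^4 * (t^4*u^3*s - q*L*(3*t^2*u^2+1)) := by ring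
    rw [hfac]
    apply mul_pos (by positivity)
    nlinarith [k1, k2]
  have k3a : q*L*(9*t^2*u^2+4) ≤ q*(3*t^4*u^3) := by
    rw [mul_assoc]; exact mul_le_mul_of_nonneg_left (by linarith) hq.le
  have k3b : q*(3*t^4*u^3) ≤ s*(3*t^4*u^3) := mul_le_mul_of_nonneg_right hsq (by positivity)
  have hdisc : 0 ≤ 4*(t^4*u^3*s^5 - q*L*(3*t^2*u^2+1)*s^4)*((3/4)*q*L*t^6*u^4)
      - (q*L*t^3*u^2*s^2)^2 := by
    have hfact : 4*(t^4*u^3*s^5 - q*L*(3*t^2*u^2+1)*s^4)*((3/4)*q*L*t^6*u^4)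
        - (q*L*t^3*u^2*s^2)^2
        = (q*L*t^6*u^4*s^4)*(3*t^4*u^3*s - q*L*(9*t^2*u^2+4)) := by ring
    rw [hfact]
    apply mul_nonneg (by positivity)
    nlinarith [k3a, k3b]
  have hX := quad_nonneg _ _ _ dg dm hA hdisc
  linarith [hX]

set_option maxHeartbeats 1000000 in
lemma lineConvex (q T0 dg M0 dm : ℝ) (hq : 0 < q)
    (hT : ∀ θ ∈ Set.Icc (0:ℝ) 1, 2 ≤ T0 + θ*dg)
    (hM : ∀ θ ∈ Set.Icc (0:ℝ) 1, q^2 ≤ M0 + θ*dm) :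
    ConvexOn ℝ (Set.Icc (0:ℝ) 1) (fun θ =>
      -Real.log (T0 + θ*dg)/Real.log 2
      + q * (Real.sqrt (1 - ((T0 + θ*dg)^2)⁻¹) * (Real.sqrt (M0 + θ*dm))⁻¹)) := by
  have hL1 : (0.69:ℝ) ≤ Real.log 2 := by linarith [Real.log_two_gt_d9]
  have hL2 : Real.log 2 ≤ 0.6932 := by linarith [Real.log_two_lt_d9]
  have hL0 : (0:ℝ) < Real.log 2 := by linarith
  -- facts at a point
  have facts : ∀ θ ∈ Set.Icc (0:ℝ) 1,
      2 ≤ T0 + θ*dg ∧ 0 < M0 + θ*dm ∧ (0.86:ℝ) ≤ Real.sqrt (1 - ((T0 + θ*dg)^2)⁻¹)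
      ∧ q ≤ Real.sqrt (M0 + θ*dm) := by
    intro θ hθ
    have h1 := hT θ hθ
    have h2 := hM θ hθ
    have hm0 : 0 < M0 + θ*dm := lt_of_lt_of_le (by positivity) h2
    refine ⟨h1, hm0, ?_, ?_⟩
    · have ht2 : (4:ℝ) ≤ (T0+θ*dg)^2 := by nlinarith
      have hV : (3/4:ℝ) ≤ 1 - ((T0 + θ*dg)^2)⁻¹ := by
        have : ((T0+θ*dg)^2)⁻¹ ≤ (4:ℝ)⁻¹ := by
          apply inv_anti₀ (by norm_num) ht2
        linarith
      rw [show (0.86:ℝ) = Real.sqrt 0.7396 by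
        rw [show (0.7396:ℝ) = 0.86^2 by norm_num, Real.sqrt_sq]; norm_num]
      exact Real.sqrt_le_sqrt (by linarith)
    · calc q = Real.sqrt (q^2) := (Real.sqrt_sq hq.le).symm
        _ ≤ _ := Real.sqrt_le_sqrt h2
  -- first derivative
  have hder : ∀ θ ∈ Set.Icc (0:ℝ) 1,
      HasDerivAt (fun θ =>
        -Real.log (T0 + θ*dg)/Real.log 2
        + q * (Real.sqrt (1 - ((T0 + θ*dg)^2)⁻¹) * (Real.sqrt (M0 + θ*dm))⁻¹))
      (-(dg*(T0 + θ*dg)⁻¹)/Real.log 2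
        + q * (dg*(((T0 + θ*dg)^3*Real.sqrt (1 - ((T0 + θ*dg)^2)⁻¹))⁻¹
                * (Real.sqrt (M0 + θ*dm))⁻¹)
             - Real.sqrt (1 - ((T0 + θ*dg)^2)⁻¹)
                * (dm*(2*(Real.sqrt (M0 + θ*dm))^3)⁻¹))) θ := by
    intro θ hθ
    obtain ⟨h1, hm0, hu86, hqs⟩ := facts θ hθ
    set t := T0 + θ*dg with hts
    set m := M0 + θ*dm with hms
    have ht0 : (0:ℝ) < t := by linarith
    have htne : t ≠ 0 := ne_of_gt ht0
    have ht2ne : t^2 ≠ 0 := pow_ne_zero 2 htne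
    have hVpos : (0:ℝ) < 1 - (t^2)⁻¹ := by
      have ht2 : (4:ℝ) ≤ t^2 := by nlinarith
      have : (t^2)⁻¹ ≤ (4:ℝ)⁻¹ := inv_anti₀ (by norm_num) ht2
      linarith
    have hVne : 1 - (t^2)⁻¹ ≠ 0 := ne_of_gt hVpos
    set u := Real.sqrt (1 - (t^2)⁻¹) with hus
    set s := Real.sqrt m with hss
    have hu0 : 0 < u := Real.sqrt_pos.2 hVpos
    have hune : u ≠ 0 := ne_of_gt hu0
    have hs0 : 0 < s := Real.sqrt_pos.2 hm0
    have hsne : s ≠ 0 := ne_of_gt hs0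
    have hTd : HasDerivAt (fun θ : ℝ => T0 + θ*dg) dg θ := by
      simpa using ((hasDerivAt_id θ).mul_const dg).const_add T0
    have hMd : HasDerivAt (fun θ : ℝ => M0 + θ*dm) dm θ := by
      simpa using ((hasDerivAt_id θ).mul_const dm).const_add M0
    have hud : HasDerivAt (fun θ : ℝ => Real.sqrt (1 - ((T0 + θ*dg)^2)⁻¹)) (dg/(t^3*u)) θ := by
      have h2 := (((hTd.pow 2).inv ht2ne).const_sub 1).sqrt hVne
      refine h2.congr_deriv ?_
      show -(-(((2:ℕ):ℝ) * t^(2-1) * dg) / (t^2)^2) / (2*u) = dg/(t^3*u)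
      field_simp
      ring
    have hsd : HasDerivAt (fun θ : ℝ => Real.sqrt (M0 + θ*dm)) (dm/(2*s)) θ := by
      have h2 := hMd.sqrt (ne_of_gt hm0)
      convert h2 using 1
    have hsid : HasDerivAt (fun θ : ℝ => (Real.sqrt (M0 + θ*dm))⁻¹) (-(dm/(2*s))/s^2) θ :=
      hsd.inv hsne
    have hlog : HasDerivAt (fun θ : ℝ => Real.log (T0 + θ*dg)) (dg/t) θ := hTd.log htne
    have main := ((hlog.neg).div_const (Real.log 2)).add ((hud.mul hsid).const_mul q)
    refine main.congr_deriv ?_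
    simp only [Pi.pow_apply, Pi.mul_apply, Pi.inv_apply, ← hts, ← hms, ← hus, ← hss]
    field_simp
    ring
  -- second derivative
  have hder2 : ∀ θ ∈ Set.Icc (0:ℝ) 1,
      HasDerivAt (fun θ =>
        -(dg*(T0 + θ*dg)⁻¹)/Real.log 2
        + q * (dg*(((T0 + θ*dg)^3*Real.sqrt (1 - ((T0 + θ*dg)^2)⁻¹))⁻¹
                * (Real.sqrt (M0 + θ*dm))⁻¹)
             - Real.sqrt (1 - ((T0 + θ*dg)^2)⁻¹)
                * (dm*(2*(Real.sqrt (M0 + θ*dm))^3)⁻¹)))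
      (dg^2/((T0 + θ*dg)^2*Real.log 2)
        + q * (3*Real.sqrt (1 - ((T0 + θ*dg)^2)⁻¹)*dm^2/(4*(Real.sqrt (M0 + θ*dm))^5)
             - dg^2*(3*(T0 + θ*dg)^2*(Real.sqrt (1 - ((T0 + θ*dg)^2)⁻¹))^2+1)
                /((T0 + θ*dg)^6*(Real.sqrt (1 - ((T0 + θ*dg)^2)⁻¹))^3*Real.sqrt (M0 + θ*dm))
             - dg*dm/((T0 + θ*dg)^3*Real.sqrt (1 - ((T0 + θ*dg)^2)⁻¹)*(Real.sqrt (M0 + θ*dm))^3))) θ := by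
    intro θ hθ
    obtain ⟨h1, hm0, hu86, hqs⟩ := facts θ hθ
    set t := T0 + θ*dg with hts
    set m := M0 + θ*dm with hms
    have ht0 : (0:ℝ) < t := by linarith
    have htne : t ≠ 0 := ne_of_gt ht0
    have ht2ne : t^2 ≠ 0 := pow_ne_zero 2 htne
    have hVpos : (0:ℝ) < 1 - (t^2)⁻¹ := by
      have ht2 : (4:ℝ) ≤ t^2 := by nlinarith
      have : (t^2)⁻¹ ≤ (4:ℝ)⁻¹ := inv_anti₀ (by norm_num) ht2
      linarith
    have hVne : 1 - (t^2)⁻¹ ≠ 0 := ne_of_gt hVpos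
    set u := Real.sqrt (1 - (t^2)⁻¹) with hus
    set s := Real.sqrt m with hss
    have hu0 : 0 < u := Real.sqrt_pos.2 hVpos
    have hune : u ≠ 0 := ne_of_gt hu0
    have hs0 : 0 < s := Real.sqrt_pos.2 hm0
    have hsne : s ≠ 0 := ne_of_gt hs0
    have hTd : HasDerivAt (fun θ : ℝ => T0 + θ*dg) dg θ := by
      simpa using ((hasDerivAt_id θ).mul_const dg).const_add T0
    have hMd : HasDerivAt (fun θ : ℝ => M0 + θ*dm) dm θ := by
      simpa using ((hasDerivAt_id θ).mul_const dm).const_add M0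
    have hud : HasDerivAt (fun θ : ℝ => Real.sqrt (1 - ((T0 + θ*dg)^2)⁻¹)) (dg/(t^3*u)) θ := by
      have h2 := (((hTd.pow 2).inv ht2ne).const_sub 1).sqrt hVne
      refine h2.congr_deriv ?_
      show -(-(((2:ℕ):ℝ) * t^(2-1) * dg) / (t^2)^2) / (2*u) = dg/(t^3*u)
      field_simp
      ring
    have hsd : HasDerivAt (fun θ : ℝ => Real.sqrt (M0 + θ*dm)) (dm/(2*s)) θ := by
      have h2 := hMd.sqrt (ne_of_gt hm0)
      convert h2 using 1
    have hsid : HasDerivAt (fun θ : ℝ => (Real.sqrt (M0 + θ*dm))⁻¹) (-(dm/(2*s))/s^2) θ :=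
      hsd.inv hsne
    have hXne : (T0 + θ*dg)^3 * Real.sqrt (1 - ((T0 + θ*dg)^2)⁻¹) ≠ 0 := by
      simp only [← hts, ← hus]
      exact mul_ne_zero (pow_ne_zero 3 htne) hune
    have hXi := ((hTd.pow 3).mul hud).inv hXne
    have hP := (hXi.mul hsid).const_mul dg
    have h2s3ne : 2*(Real.sqrt (M0 + θ*dm))^3 ≠ 0 := by
      simp only [← hms, ← hss]
      positivity
    have hQi := (((hsd.pow 3).const_mul 2).inv h2s3ne).const_mul dm
    have hQ := hud.mul hQi
    have main2 := (((hTd.inv htne).const_mul dg).neg.div_const (Real.log 2)).add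
      ((hP.sub hQ).const_mul q)
    refine main2.congr_deriv ?_
    simp only [Pi.pow_apply, Pi.mul_apply, Pi.inv_apply, ← hts, ← hms, ← hus, ← hss]
    field_simp
    ring
  -- positivity of the second derivative
  have hpos : ∀ θ ∈ Set.Icc (0:ℝ) 1,
      0 ≤ dg^2/((T0 + θ*dg)^2*Real.log 2)
        + q * (3*Real.sqrt (1 - ((T0 + θ*dg)^2)⁻¹)*dm^2/(4*(Real.sqrt (M0 + θ*dm))^5)
             - dg^2*(3*(T0 + θ*dg)^2*(Real.sqrt (1 - ((T0 + θ*dg)^2)⁻¹))^2+1)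
                /((T0 + θ*dg)^6*(Real.sqrt (1 - ((T0 + θ*dg)^2)⁻¹))^3*Real.sqrt (M0 + θ*dm))
             - dg*dm/((T0 + θ*dg)^3*Real.sqrt (1 - ((T0 + θ*dg)^2)⁻¹)*(Real.sqrt (M0 + θ*dm))^3)) := by
    intro θ hθ
    obtain ⟨h1, hm0, hu86, hqs⟩ := facts θ hθ
    set t := T0 + θ*dg with hts
    set m := M0 + θ*dm with hms
    have ht0 : (0:ℝ) < t := by linarith
    have htne : t ≠ 0 := ne_of_gt ht0
    set u := Real.sqrt (1 - (t^2)⁻¹) with hus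
    set s := Real.sqrt m with hss
    have hu0 : (0:ℝ) < u := by linarith
    have hune : u ≠ 0 := ne_of_gt hu0
    have hs0 : 0 < s := lt_of_lt_of_le hq hqs
    have hsne : s ≠ 0 := ne_of_gt hs0
    have hE := Epoly t u s q dg dm (Real.log 2) h1 hu86 hqs hq hL1 hL2
    have hEq : dg^2/(t^2*Real.log 2)
        + q * (3*u*dm^2/(4*s^5) - dg^2*(3*t^2*u^2+1)/(t^6*u^3*s) - dg*dm/(t^3*u*s^3))
        = (4*dg^2*t^4*u^3*s^5 + 3*q*(Real.log 2)*dm^2*t^6*u^4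
            - 4*q*(Real.log 2)*dg^2*(3*t^2*u^2+1)*s^4
            - 4*q*(Real.log 2)*dg*dm*t^3*u^2*s^2)
          / (4*(Real.log 2)*t^6*u^3*s^5) := by
      field_simp
      ring
    rw [hEq]
    exact div_nonneg hE (by positivity)
  -- assemble
  refine convexOn_of_hasDerivWithinAt2_nonneg (convex_Icc 0 1)
    (f' := fun θ => -(dg*(T0 + θ*dg)⁻¹)/Real.log 2
        + q * (dg*(((T0 + θ*dg)^3*Real.sqrt (1 - ((T0 + θ*dg)^2)⁻¹))⁻¹
                * (Real.sqrt (M0 + θ*dm))⁻¹)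
             - Real.sqrt (1 - ((T0 + θ*dg)^2)⁻¹)
                * (dm*(2*(Real.sqrt (M0 + θ*dm))^3)⁻¹)))
    (f'' := fun θ => dg^2/((T0 + θ*dg)^2*Real.log 2)
        + q * (3*Real.sqrt (1 - ((T0 + θ*dg)^2)⁻¹)*dm^2/(4*(Real.sqrt (M0 + θ*dm))^5)
             - dg^2*(3*(T0 + θ*dg)^2*(Real.sqrt (1 - ((T0 + θ*dg)^2)⁻¹))^2+1)
                /((T0 + θ*dg)^6*(Real.sqrt (1 - ((T0 + θ*dg)^2)⁻¹))^3*Real.sqrt (M0 + θ*dm))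
             - dg*dm/((T0 + θ*dg)^3*Real.sqrt (1 - ((T0 + θ*dg)^2)⁻¹)*(Real.sqrt (M0 + θ*dm))^3)))
    (fun θ hθ => (hder θ hθ).continuousAt.continuousWithinAt) ?_ ?_ ?_
  · rw [interior_Icc]
    intro θ hθ
    exact ((hder θ (Set.Ioo_subset_Icc_self hθ)).hasDerivWithinAt)
  · rw [interior_Icc]
    intro θ hθ
    exact ((hder2 θ (Set.Ioo_subset_Icc_self hθ)).hasDerivWithinAt)
  · rw [interior_Icc]
    intro θ hθ
    exact hpos θ (Set.Ioo_subset_Icc_self hθ)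

lemma gauss_eq : (fun t : ℝ => Real.exp (-t ^ 2 / 2) / Real.sqrt (2 * Real.pi))
    = fun t => Real.exp (-(1/2) * t ^ 2) * (Real.sqrt (2 * Real.pi))⁻¹ := by
  funext t; rw [div_eq_mul_inv]; ring_nf

lemma gauss_integrable :
    Integrable (fun t : ℝ => Real.exp (-t ^ 2 / 2) / Real.sqrt (2 * Real.pi)) := by
  rw [gauss_eq]
  exact (integrable_exp_neg_mul_sq (by norm_num)).mul_const _

lemma Qfun_zero : Qfun 0 = 1/2 := by
  rw [Qfun]
  simp only [gauss_eq]
  rw [MeasureTheory.integral_mul_const, integral_gaussian_Ioi]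
  rw [show (π/(1/2) : ℝ) = 2*π by ring]
  have h : Real.sqrt (2*π) ≠ 0 := by positivity
  field_simp

lemma q_nonneg (ε q : ℝ) (hε : ε ∈ Set.Ioc (0 : ℝ) (1 / 2)) (hq : Qfun q = ε) : 0 ≤ q := by
  by_contra h
  push_neg at h
  have hsplit : Qfun q = (∫ t in Set.Ioc q 0, Real.exp (-t ^ 2 / 2) / Real.sqrt (2 * Real.pi))
      + Qfun 0 := by
    rw [Qfun, Qfun, ← MeasureTheory.setIntegral_union (Set.Ioc_disjoint_Ioi le_rfl)
      measurableSet_Ioi gauss_integrable.integrableOn gauss_integrable.integrableOn,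
      Set.Ioc_union_Ioi_eq_Ioi h.le]
  have hposI : 0 < ∫ t in Set.Ioc q 0, Real.exp (-t ^ 2 / 2) / Real.sqrt (2 * Real.pi) := by
    rw [setIntegral_pos_iff_support_of_nonneg_ae]
    · have hsupp : Function.support (fun t : ℝ => Real.exp (-t ^ 2 / 2) / Real.sqrt (2 * Real.pi))
          = Set.univ := by
        ext t; simp [Function.mem_support]
        positivity
      rw [hsupp, Set.univ_inter]
      simpa using h
    · filter_upwards with t
      positivity
    · exact gauss_integrable.integrableOn
  rw [Qfun_zero] at hsplit
  have : (1/2 : ℝ) < Qfun q := by linarith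
  rw [hq] at this
  linarith [hε.2]

lemma S_convex (c : ℝ) : Convex ℝ {p : ℝ × ℝ | 1 ≤ p.2 ∧ c ≤ p.1} := by
  intro x hx y hy a b ha hb hab
  obtain ⟨hx2, hx1⟩ := hx
  obtain ⟨hy2, hy1⟩ := hy
  constructor
  · simp only [Prod.snd_add, Prod.smul_snd, smul_eq_mul]
    nlinarith [mul_le_mul_of_nonneg_left hx2 ha, mul_le_mul_of_nonneg_left hy2 hb]
  · simp only [Prod.fst_add, Prod.smul_fst, smul_eq_mul]
    have h2 : a*c + b*c = c := by linear_combination c * hab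
    linarith [mul_le_mul_of_nonneg_left hx1 ha, mul_le_mul_of_nonneg_left hy1 hb, h2]

lemma rate_rw (q m γ : ℝ) (hγ : 1 ≤ γ) (hm : 0 ≤ m) :
    -rate q m γ = -Real.log (1 + γ)/Real.log 2
      + q * (Real.sqrt (1 - ((1 + γ)^2)⁻¹) * (Real.sqrt m)⁻¹) := by
  have hV : 0 ≤ Vdisp γ := by
    rw [Vdisp]
    have h2 : (4:ℝ) ≤ (1+γ)^2 := by nlinarith
    have : ((1+γ)^2)⁻¹ ≤ (4:ℝ)⁻¹ := by
      apply inv_anti₀ (by norm_num) h2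
    linarith
  rw [rate, Cap, Real.logb, Vdisp, Real.sqrt_div (by rw [Vdisp] at hV; exact hV)]
  rw [div_eq_mul_inv (Real.sqrt _)]
  ring

-- concavity of log for the q = 0 case
lemma neg_cap_convex (c : ℝ) :
    ConvexOn ℝ {p : ℝ × ℝ | 1 ≤ p.2 ∧ c ≤ p.1} (fun p => -Cap p.2) := by
  refine ⟨S_convex c, ?_⟩
  intro x hx y hy a b ha hb hab
  simp only [Prod.snd_add, Prod.smul_snd, smul_eq_mul, Cap, Real.logb]
  have hx2 := hx.1
  have hy2 := hy.1
  have hX : (1 + x.2 : ℝ) ∈ Set.Ioi (0:ℝ) := by simp; linarith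
  have hY : (1 + y.2 : ℝ) ∈ Set.Ioi (0:ℝ) := by simp; linarith
  have hlog := strictConcaveOn_log_Ioi.concaveOn.2 hX hY ha hb hab
  simp only [smul_eq_mul] at hlog
  have he : a * (1 + x.2) + b * (1 + y.2) = 1 + (a * x.2 + b * y.2) := by
    have : a + b = 1 := hab
    nlinarith
  rw [he] at hlog
  have hL0 : (0:ℝ) < Real.log 2 := Real.log_pos (by norm_num)
  have h2 : (a * Real.log (1 + x.2) + b * Real.log (1 + y.2))/Real.log 2
      ≤ Real.log (1 + (a * x.2 + b * y.2))/Real.log 2 := by gcongr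
  calc -(Real.log (1 + (a * x.2 + b * y.2)) / Real.log 2)
      ≤ -((a * Real.log (1 + x.2) + b * Real.log (1 + y.2)) / Real.log 2) := neg_le_neg h2
    _ = a * -(Real.log (1 + x.2) / Real.log 2) + b * -(Real.log (1 + y.2) / Real.log 2) := by
        ring

/-- (Lemma 3.) For a target error probability `ε̄ ∈ (0,1/2]` with `q = Q⁻¹(ε̄)`, the
negative FBL coding rate `(m,γ) ↦ −r(m,γ)` is jointly convex on the convex set
`{ (m,γ) : γ ≥ 1, m ≥ q² }`. -/
theorem neg_rate_jointly_convex (ε q : ℝ)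
    (hε : ε ∈ Set.Ioc (0 : ℝ) (1 / 2)) (hq : Qfun q = ε) :
    ConvexOn ℝ {p : ℝ × ℝ | 1 ≤ p.2 ∧ q ^ 2 ≤ p.1} (fun p => -rate q p.1 p.2) := by
  have hq0 : 0 ≤ q := q_nonneg ε q hε hq
  rcases eq_or_lt_of_le hq0 with hq0' | hqpos
  · -- case q = 0
    have hqz : q = 0 := hq0'.symm
    have hfun : (fun p : ℝ × ℝ => -rate (0:ℝ) p.1 p.2) = fun p => -Cap p.2 := by
      funext p; simp [rate]
    rw [hqz, hfun]
    exact neg_cap_convex _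
  · -- case 0 < q
    refine ⟨S_convex _, ?_⟩
    rintro x ⟨hx2, hx1⟩ y ⟨hy2, hy1⟩ a b ha hb hab
    have hT : ∀ θ ∈ Set.Icc (0:ℝ) 1, 2 ≤ (1 + x.2) + θ*(y.2 - x.2) := by
      intro θ hθ
      nlinarith [mul_nonneg (by linarith [hθ.2] : (0:ℝ) ≤ 1 - θ)
          (by linarith : (0:ℝ) ≤ x.2 - 1),
        mul_nonneg hθ.1 (by linarith : (0:ℝ) ≤ y.2 - 1)]
    have hM : ∀ θ ∈ Set.Icc (0:ℝ) 1, q^2 ≤ x.1 + θ*(y.1 - x.1) := by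
      intro θ hθ
      nlinarith [mul_nonneg (by linarith [hθ.2] : (0:ℝ) ≤ 1 - θ)
          (by linarith : (0:ℝ) ≤ x.1 - q^2),
        mul_nonneg hθ.1 (by linarith : (0:ℝ) ≤ y.1 - q^2)]
    have hline := lineConvex q (1 + x.2) (y.2 - x.2) x.1 (y.1 - x.1) hqpos hT hM
    have key := hline.2 (Set.left_mem_Icc.2 zero_le_one) (Set.right_mem_Icc.2 zero_le_one)
      ha hb hab
    simp only [smul_eq_mul, mul_zero, mul_one, zero_add, zero_mul, add_zero] at key
    have e1 : 1 + x.2 + 1*(y.2 - x.2) = 1 + y.2 := by ring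
    have e2 : x.1 + 1*(y.1 - x.1) = y.1 := by ring
    have hba : a = 1 - b := by linarith
    have e3 : 1 + x.2 + b*(y.2 - x.2) = 1 + (a * x.2 + b * y.2) := by rw [hba]; ring
    have e4 : x.1 + b*(y.1 - x.1) = a * x.1 + b * y.1 := by rw [hba]; ring
    rw [e1, e2, e3, e4] at key
    simp only [Prod.fst_add, Prod.snd_add, Prod.smul_fst, Prod.smul_snd, smul_eq_mul]
    have hcomb2 : (1:ℝ) ≤ a * x.2 + b * y.2 := by
      nlinarith [mul_le_mul_of_nonneg_left hx2 ha, mul_le_mul_of_nonneg_left hy2 hb]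
    have hcomb1 : (0:ℝ) ≤ a * x.1 + b * y.1 := by
      have h0x : (0:ℝ) ≤ x.1 := le_trans (sq_nonneg q) hx1
      have h0y : (0:ℝ) ≤ y.1 := le_trans (sq_nonneg q) hy1
      positivity
    rw [rate_rw q _ _ hcomb2 hcomb1, rate_rw q x.1 x.2 hx2 (le_trans (sq_nonneg q) hx1),
      rate_rw q y.1 y.2 hy2 (le_trans (sq_nonneg q) hy1)]
    convert key using 2
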